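/- The graphon dual total correlation for three graphons, DTC = H(𝐖₁,₂,₃) - Σᵢ₌₁³ [H(𝐖₁,₂,₃) - H(𝐖_{excluding i})] = Σᵢ H(𝐖 excluding i) - 2·H(𝐖₁,₂,₃), is nonnegative and bounded above by H(𝐖₁,₂,₃). -/

import Mathlib

open MeasureTheory Real
open scoped Classical

/-- Binary entropy function. -/
noncomputable def binEnt (x : ℝ) : ℝ := -x * Real.log x - (1 - x) * Real.log (1 - x)

/-- The unit square `[0,1]²`. -/
def unitSq : Set (ℝ × ℝ) := Set.Icc 0 1 ×ˢ Set.Icc 0 1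

/-- A graphon: a symmetric measurable function with values in `[0,1]` on the unit square. -/
def IsGraphon (W : ℝ × ℝ → ℝ) : Prop :=
  Measurable W ∧ (∀ p : ℝ × ℝ, W p.swap = W p) ∧ ∀ p ∈ unitSq, W p ∈ Set.Icc (0:ℝ) 1

/-- Graphon entropy. -/
noncomputable def gEnt (W : ℝ × ℝ → ℝ) : ℝ := ∫ p in unitSq, binEnt (W p)

/-- `-x log x`. -/
noncomputable def nlog (x : ℝ) : ℝ := -(x * Real.log x)

/-- Bivariate joint graphon entropy of the system `(W1, W2, W12)`. -/
noncomputable def jEnt2 (W1 W2 W12 : ℝ × ℝ → ℝ) : ℝ :=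
  ∫ p in unitSq, (nlog (W12 p) + nlog (W1 p - W12 p) + nlog (W2 p - W12 p)
    + nlog (1 - W1 p - W2 p + W12 p))

/-- Validity (nonnegativity of all four probability entries) of the bivariate system. -/
def BivNonneg (W1 W2 W12 : ℝ × ℝ → ℝ) : Prop :=
  ∀ p ∈ unitSq, 0 ≤ W12 p ∧ 0 ≤ W1 p - W12 p ∧ 0 ≤ W2 p - W12 p ∧
    0 ≤ 1 - W1 p - W2 p + W12 p

/-- Trivariate joint graphon entropy. -/
noncomputable def jEnt3 (W1 W2 W3 W12 W13 W23 W123 : ℝ × ℝ → ℝ) : ℝ :=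
  ∫ p in unitSq, (nlog (W123 p) + nlog (W12 p - W123 p) + nlog (W13 p - W123 p)
    + nlog (W23 p - W123 p)
    + nlog (W1 p - W12 p - W13 p + W123 p) + nlog (W2 p - W12 p - W23 p + W123 p)
    + nlog (W3 p - W13 p - W23 p + W123 p)
    + nlog (1 - W1 p - W2 p - W3 p + W12 p + W13 p + W23 p - W123 p))

/-- Validity (nonnegativity of all eight probability entries) of the trivariate system. -/
def TriNonneg (W1 W2 W3 W12 W13 W23 W123 : ℝ × ℝ → ℝ) : Prop :=
  ∀ p ∈ unitSq, 0 ≤ W123 p ∧ 0 ≤ W12 p - W123 p ∧ 0 ≤ W13 p - W123 p ∧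
    0 ≤ W23 p - W123 p ∧ 0 ≤ W1 p - W12 p - W13 p + W123 p ∧
    0 ≤ W2 p - W12 p - W23 p + W123 p ∧ 0 ≤ W3 p - W13 p - W23 p + W123 p ∧
    0 ≤ 1 - W1 p - W2 p - W3 p + W12 p + W13 p + W23 p - W123 p

/-!
At each point of the unit square the seven values are the moments of a law of
`(X₁, X₂, X₃) ∈ Bool³`, and the integrands of `jEnt3` and `jEnt2` are the Shannon entropies of
this law and of its pairwise marginals. Pointwise, Han's inequality
`2 H(X₁X₂X₃) ≤ H(X₂X₃) + H(X₁X₃) + H(X₁X₂)` gives the lower bound and `H(XᵢXⱼ) ≤ H(X₁X₂X₃)` the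
upper one; all entropies are bounded, so both inequalities integrate. Han's inequality is the sum
of `H(X₁X₂X₃) ≤ H(X₁) + H(X₂X₃)` and `H(X₁X₂X₃) + H(X₁) ≤ H(X₁X₂) + H(X₁X₃)`, both instances of
subadditivity of entropy on a two-way table, which is Gibbs' inequality `log t ≤ t - 1`.
-/

open Finset
open scoped ENNReal

section TableEntropy

variable {ι κ : Type*}

theorem Real.negMulLog_add_mul_log_le {a b : ℝ} (ha : 0 ≤ a) (hb : 0 ≤ b) (hab : 0 < a → 0 < b) :
    negMulLog a + a * log b ≤ b - a := by
  rcases ha.eq_or_lt with rfl | ha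
  · simpa using hb
  have hb := hab ha
  calc negMulLog a + a * log b = a * log (b / a) := by
        rw [log_div hb.ne' ha.ne', negMulLog]; ring
    _ ≤ a * (b / a - 1) := mul_le_mul_of_nonneg_left (log_le_sub_one_of_pos (by positivity)) ha.le
    _ = b - a := by field_simp

theorem Real.negMulLog_sum_le_sum_negMulLog {s : Finset ι} {f : ι → ℝ} (hf : ∀ i ∈ s, 0 ≤ f i) :
    negMulLog (∑ i ∈ s, f i) ≤ ∑ i ∈ s, negMulLog (f i) := by
  have hle : ∀ i ∈ s, f i * log (f i) ≤ f i * log (∑ j ∈ s, f j) := fun i hi => by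
    rcases (hf i hi).eq_or_lt with h | h
    · simp [← h]
    · exact mul_le_mul_of_nonneg_left (log_le_log h (single_le_sum hf hi)) h.le
  simp only [negMulLog_eq_neg, sum_mul, ← sum_neg_distrib]
  exact sum_le_sum fun i hi => neg_le_neg (hle i hi)

variable [Fintype ι] [Fintype κ]

/-- Subadditivity of entropy for a two-way table of masses. -/
theorem Real.sum_sum_negMulLog_add_negMulLog_sum_le {a : ι → κ → ℝ} (ha : ∀ i j, 0 ≤ a i j) :
    ∑ i, ∑ j, negMulLog (a i j) + negMulLog (∑ i, ∑ j, a i j)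
      ≤ ∑ i, negMulLog (∑ j, a i j) + ∑ j, negMulLog (∑ i, a i j) := by
  set r : ι → ℝ := fun i => ∑ j, a i j
  set c : κ → ℝ := fun j => ∑ i, a i j
  set S := ∑ i, r i
  have hr : ∀ i j, a i j ≤ r i := fun i j => single_le_sum (fun j _ => ha i j) (mem_univ j)
  have hc : ∀ i j, a i j ≤ c j := fun i j => single_le_sum (fun i _ => ha i j) (mem_univ i)
  have hrS : ∀ i, r i ≤ S :=
    fun i => single_le_sum (fun i _ => sum_nonneg fun j _ => ha i j) (mem_univ i)
  rcases (sum_nonneg fun i _ => sum_nonneg fun j _ => ha i j : (0:ℝ) ≤ S).eq_or_lt with hS | hS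
  · have hzero : ∀ i j, a i j = 0 := fun i j =>
      le_antisymm ((hr i j).trans ((hrS i).trans hS.ge)) (ha i j)
    simp [hzero, show S = 0 from hS.symm]
  have cell : ∀ i j, negMulLog (a i j)
      + (a i j * log (r i) + a i j * log (c j) - a i j * log S) ≤ r i * c j / S - a i j := by
    intro i j
    have hpos : 0 < a i j → 0 < r i ∧ 0 < c j := fun h => ⟨h.trans_le (hr i j), h.trans_le (hc i j)⟩
    have hlog : a i j * log (r i * c j / S)
        = a i j * log (r i) + a i j * log (c j) - a i j * log S := by
      rcases (ha i j).eq_or_lt with h | h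
      · simp [← h]
      obtain ⟨hr0, hc0⟩ := hpos h
      rw [log_div (mul_pos hr0 hc0).ne' hS.ne', log_mul hr0.ne' hc0.ne']
      ring
    rw [← hlog]
    have hr0 := (ha i j).trans (hr i j)
    have hc0 := (ha i j).trans (hc i j)
    refine negMulLog_add_mul_log_le (ha i j) (by positivity) fun h => ?_
    exact div_pos (mul_pos (hpos h).1 (hpos h).2) hS
  have hrow : ∑ i, ∑ j, a i j * log (r i) = -∑ i, negMulLog (r i) := by
    simp [negMulLog, ← sum_mul, r]
  have hcol : ∑ i, ∑ j, a i j * log (c j) = -∑ j, negMulLog (c j) := by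
    rw [sum_comm]; simp [negMulLog, ← sum_mul, c]
  have htot : ∑ i, ∑ j, a i j * log S = -negMulLog S := by
    simp [negMulLog, ← sum_mul, S, r]
  have hprod : ∑ i, ∑ j, r i * c j / S = S := by
    simp only [← sum_div, ← sum_mul_sum, show ∑ j, c j = S from sum_comm]
    exact mul_div_cancel_right₀ _ hS.ne'
  have total := sum_le_sum fun i (_ : i ∈ univ) => sum_le_sum fun j (_ : j ∈ univ) => cell i j
  simp only [sum_add_distrib, sum_sub_distrib, hrow, hcol, htot, hprod] at total
  linarith

theorem Real.sum_negMulLog_sum_le_sum_sum_negMulLog {a : ι → κ → ℝ} (ha : ∀ i j, 0 ≤ a i j) :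
    ∑ i, negMulLog (∑ j, a i j) ≤ ∑ i, ∑ j, negMulLog (a i j) :=
  sum_le_sum fun i _ => negMulLog_sum_le_sum_negMulLog fun j _ => ha i j

end TableEntropy

section HanInequality

variable {α β γ : Type*} [Fintype α] [Fintype β] [Fintype γ] {q : α → β → γ → ℝ}

/-- Han's inequality for three variables, for an unnormalised mass function `q`. -/
theorem Real.two_mul_sum_negMulLog_add_negMulLog_sum_le (hq : ∀ x y z, 0 ≤ q x y z) :
    2 * ∑ x, ∑ y, ∑ z, negMulLog (q x y z) + negMulLog (∑ x, ∑ y, ∑ z, q x y z)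
      ≤ ∑ y, ∑ z, negMulLog (∑ x, q x y z) + ∑ x, ∑ z, negMulLog (∑ y, q x y z)
        + ∑ x, ∑ y, negMulLog (∑ z, q x y z) := by
  -- `H(X₁X₂X₃) ≤ H(X₁) + H(X₂X₃)`
  have split := sum_sum_negMulLog_add_negMulLog_sum_le
    (a := fun x (yz : β × γ) => q x yz.1 yz.2) fun x yz => hq x yz.1 yz.2
  simp only [Fintype.sum_prod_type] at split
  -- `H(X₁X₂X₃) + H(X₁) ≤ H(X₁X₂) + H(X₁X₃)`, one table for each value of `X₁`
  have cond := sum_le_sum fun x (_ : x ∈ univ) => sum_sum_negMulLog_add_negMulLog_sum_le (hq x)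
  simp only [sum_add_distrib] at cond
  linarith

theorem Real.sum_negMulLog_marginals_le (hq : ∀ x y z, 0 ≤ q x y z) :
    ∑ y, ∑ z, negMulLog (∑ x, q x y z) + ∑ x, ∑ z, negMulLog (∑ y, q x y z)
        + ∑ x, ∑ y, negMulLog (∑ z, q x y z)
      ≤ 3 * ∑ x, ∑ y, ∑ z, negMulLog (q x y z) := by
  have h₂₃ : ∑ y, ∑ z, negMulLog (∑ x, q x y z) ≤ ∑ x, ∑ y, ∑ z, negMulLog (q x y z) := by
    calc _ ≤ ∑ y, ∑ z, ∑ x, negMulLog (q x y z) :=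
          sum_le_sum fun y _ => sum_negMulLog_sum_le_sum_sum_negMulLog fun z x => hq x y z
      _ = _ := (sum_congr rfl fun y _ => sum_comm).trans sum_comm
  have h₁₃ : ∑ x, ∑ z, negMulLog (∑ y, q x y z) ≤ ∑ x, ∑ y, ∑ z, negMulLog (q x y z) :=
    sum_le_sum fun x _ => (sum_negMulLog_sum_le_sum_sum_negMulLog fun z y => hq x y z).trans_eq
      sum_comm
  have h₁₂ : ∑ x, ∑ y, negMulLog (∑ z, q x y z) ≤ ∑ x, ∑ y, ∑ z, negMulLog (q x y z) :=
    sum_le_sum fun x _ => sum_negMulLog_sum_le_sum_sum_negMulLog (hq x)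
  linarith

end HanInequality

section BernoulliSystem

/-- The masses of the law of `(X₁, X₂, X₃) ∈ Bool³` with `P(Xᵢ) = wᵢ`, `P(XᵢXⱼ) = wᵢⱼ` and
`P(X₁X₂X₃) = w₁₂₃`, by inclusion–exclusion. -/
def triBernoulli (w1 w2 w3 w12 w13 w23 w123 : ℝ) : Bool → Bool → Bool → ℝ
  | true, true, true => w123
  | true, true, false => w12 - w123
  | true, false, true => w13 - w123
  | false, true, true => w23 - w123
  | true, false, false => w1 - w12 - w13 + w123
  | false, true, false => w2 - w12 - w23 + w123
  | false, false, true => w3 - w13 - w23 + w123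
  | false, false, false => 1 - w1 - w2 - w3 + w12 + w13 + w23 - w123

def biBernoulli (w1 w2 w12 : ℝ) : Bool → Bool → ℝ
  | true, true => w12
  | true, false => w1 - w12
  | false, true => w2 - w12
  | false, false => 1 - w1 - w2 + w12

noncomputable def triBernoulliEntropy (w1 w2 w3 w12 w13 w23 w123 : ℝ) : ℝ :=
  ∑ x, ∑ y, ∑ z, negMulLog (triBernoulli w1 w2 w3 w12 w13 w23 w123 x y z)

noncomputable def biBernoulliEntropy (w1 w2 w12 : ℝ) : ℝ :=
  ∑ x, ∑ y, negMulLog (biBernoulli w1 w2 w12 x y)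

variable (w1 w2 w3 w12 w13 w23 w123 : ℝ)

theorem sum_triBernoulli : ∑ x, ∑ y, ∑ z, triBernoulli w1 w2 w3 w12 w13 w23 w123 x y z = 1 := by
  simp only [Fintype.sum_bool, triBernoulli]; ring

theorem sum_triBernoulli_fst (y z : Bool) :
    ∑ x, triBernoulli w1 w2 w3 w12 w13 w23 w123 x y z = biBernoulli w2 w3 w23 y z := by
  cases y <;> cases z <;> simp only [Fintype.sum_bool, triBernoulli, biBernoulli] <;> ring

theorem sum_triBernoulli_snd (x z : Bool) :
    ∑ y, triBernoulli w1 w2 w3 w12 w13 w23 w123 x y z = biBernoulli w1 w3 w13 x z := by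
  cases x <;> cases z <;> simp only [Fintype.sum_bool, triBernoulli, biBernoulli] <;> ring

theorem sum_triBernoulli_thd (x y : Bool) :
    ∑ z, triBernoulli w1 w2 w3 w12 w13 w23 w123 x y z = biBernoulli w1 w2 w12 x y := by
  cases x <;> cases y <;> simp only [Fintype.sum_bool, triBernoulli, biBernoulli] <;> ring

theorem sum_biBernoulli (w1 w2 w12 : ℝ) : ∑ x, ∑ y, biBernoulli w1 w2 w12 x y = 1 := by
  simp only [Fintype.sum_bool, biBernoulli]; ring

variable {w1 w2 w3 w12 w13 w23 w123}

theorem triBernoulli_le_one (h : ∀ x y z, 0 ≤ triBernoulli w1 w2 w3 w12 w13 w23 w123 x y z)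
    (x y z : Bool) : triBernoulli w1 w2 w3 w12 w13 w23 w123 x y z ≤ 1 :=
  calc _ ≤ ∑ z, triBernoulli w1 w2 w3 w12 w13 w23 w123 x y z :=
        single_le_sum (fun z _ => h x y z) (mem_univ z)
    _ ≤ ∑ y, ∑ z, triBernoulli w1 w2 w3 w12 w13 w23 w123 x y z :=
        single_le_sum (fun y _ => sum_nonneg fun z _ => h x y z) (mem_univ y)
    _ ≤ ∑ x, ∑ y, ∑ z, triBernoulli w1 w2 w3 w12 w13 w23 w123 x y z :=
        single_le_sum (fun x _ => sum_nonneg fun y _ => sum_nonneg fun z _ => h x y z) (mem_univ x)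
    _ = 1 := sum_triBernoulli ..

theorem biBernoulli_le_one {w1 w2 w12 : ℝ} (h : ∀ x y, 0 ≤ biBernoulli w1 w2 w12 x y)
    (x y : Bool) : biBernoulli w1 w2 w12 x y ≤ 1 :=
  calc _ ≤ ∑ y, biBernoulli w1 w2 w12 x y := single_le_sum (fun y _ => h x y) (mem_univ y)
    _ ≤ ∑ x, ∑ y, biBernoulli w1 w2 w12 x y :=
        single_le_sum (fun x _ => sum_nonneg fun y _ => h x y) (mem_univ x)
    _ = 1 := sum_biBernoulli ..

theorem two_mul_triBernoulliEntropy_le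
    (h : ∀ x y z, 0 ≤ triBernoulli w1 w2 w3 w12 w13 w23 w123 x y z) :
    2 * triBernoulliEntropy w1 w2 w3 w12 w13 w23 w123
      ≤ biBernoulliEntropy w2 w3 w23 + biBernoulliEntropy w1 w3 w13
        + biBernoulliEntropy w1 w2 w12 := by
  have han := two_mul_sum_negMulLog_add_negMulLog_sum_le h
  rw [sum_triBernoulli, negMulLog_one, add_zero] at han
  simpa only [triBernoulliEntropy, biBernoulliEntropy, sum_triBernoulli_fst, sum_triBernoulli_snd,
    sum_triBernoulli_thd] using han

theorem biBernoulliEntropy_marginals_le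
    (h : ∀ x y z, 0 ≤ triBernoulli w1 w2 w3 w12 w13 w23 w123 x y z) :
    biBernoulliEntropy w2 w3 w23 + biBernoulliEntropy w1 w3 w13 + biBernoulliEntropy w1 w2 w12
      ≤ 3 * triBernoulliEntropy w1 w2 w3 w12 w13 w23 w123 := by
  simpa only [triBernoulliEntropy, biBernoulliEntropy, sum_triBernoulli_fst, sum_triBernoulli_snd,
    sum_triBernoulli_thd] using sum_negMulLog_marginals_le h

end BernoulliSystem

section Integration

variable {X : Type*} [MeasurableSpace X] {μ : Measure X} {s : Set X}
  {W1 W2 W3 W12 W13 W23 W123 : X → ℝ}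

theorem integrableOn_negMulLog_comp (hs : MeasurableSet s) (hμs : μ s ≠ ∞) {f : X → ℝ}
    (hf : Measurable f) (h : ∀ p ∈ s, f p ∈ Set.Icc 0 1) :
    IntegrableOn (fun p => negMulLog (f p)) s μ := by
  refine Measure.integrableOn_of_bounded (M := 1) hμs
    (continuous_negMulLog.measurable.comp hf).aestronglyMeasurable
    ((ae_restrict_iff' hs).2 (ae_of_all _ fun p hp => ?_))
  obtain ⟨h0, h1⟩ := h p hp
  rw [Real.norm_eq_abs, abs_le]
  constructor <;> linarith [negMulLog_nonneg h0 h1, negMulLog_le_one_sub_self h0]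

theorem measurable_triBernoulli (h1 : Measurable W1) (h2 : Measurable W2) (h3 : Measurable W3)
    (h12 : Measurable W12) (h13 : Measurable W13) (h23 : Measurable W23)
    (h123 : Measurable W123) (x y z : Bool) :
    Measurable fun p =>
      triBernoulli (W1 p) (W2 p) (W3 p) (W12 p) (W13 p) (W23 p) (W123 p) x y z := by
  cases x <;> cases y <;> cases z <;> simp only [triBernoulli] <;> fun_prop

theorem measurable_biBernoulli (h1 : Measurable W1) (h2 : Measurable W2) (h12 : Measurable W12)
    (x y : Bool) : Measurable fun p => biBernoulli (W1 p) (W2 p) (W12 p) x y := by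
  cases x <;> cases y <;> simp only [biBernoulli] <;> fun_prop

theorem integrableOn_triBernoulliEntropy (hs : MeasurableSet s) (hμs : μ s ≠ ∞)
    (h1 : Measurable W1) (h2 : Measurable W2) (h3 : Measurable W3)
    (h12 : Measurable W12) (h13 : Measurable W13) (h23 : Measurable W23)
    (h123 : Measurable W123)
    (h : ∀ p ∈ s, ∀ x y z,
      0 ≤ triBernoulli (W1 p) (W2 p) (W3 p) (W12 p) (W13 p) (W23 p) (W123 p) x y z) :
    IntegrableOn
      (fun p => triBernoulliEntropy (W1 p) (W2 p) (W3 p) (W12 p) (W13 p) (W23 p) (W123 p)) s μ :=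
  integrable_finsetSum _ fun x _ => integrable_finsetSum _ fun y _ =>
    integrable_finsetSum _ fun z _ => integrableOn_negMulLog_comp hs hμs
      (measurable_triBernoulli h1 h2 h3 h12 h13 h23 h123 x y z)
      fun p hp => ⟨h p hp x y z, triBernoulli_le_one (h p hp) x y z⟩

theorem integrableOn_biBernoulliEntropy (hs : MeasurableSet s) (hμs : μ s ≠ ∞)
    (h1 : Measurable W1) (h2 : Measurable W2) (h12 : Measurable W12)
    (h : ∀ p ∈ s, ∀ x y, 0 ≤ biBernoulli (W1 p) (W2 p) (W12 p) x y) :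
    IntegrableOn (fun p => biBernoulliEntropy (W1 p) (W2 p) (W12 p)) s μ :=
  integrable_finsetSum _ fun x _ => integrable_finsetSum _ fun y _ =>
    integrableOn_negMulLog_comp hs hμs (measurable_biBernoulli h1 h2 h12 x y)
      fun p hp => ⟨h p hp x y, biBernoulli_le_one (h p hp) x y⟩

end Integration

section Graphon

variable {W1 W2 W3 W12 W13 W23 W123 : ℝ × ℝ → ℝ}

theorem measurableSet_unitSq : MeasurableSet unitSq := measurableSet_Icc.prod measurableSet_Icc

theorem volume_unitSq_ne_top : volume unitSq ≠ ∞ :=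
  (isCompact_Icc.prod isCompact_Icc).measure_lt_top.ne

theorem jEnt3_eq_integral_triBernoulliEntropy :
    jEnt3 W1 W2 W3 W12 W13 W23 W123
      = ∫ p in unitSq,
          triBernoulliEntropy (W1 p) (W2 p) (W3 p) (W12 p) (W13 p) (W23 p) (W123 p) := by
  unfold jEnt3
  congr 1 with p
  simp only [triBernoulliEntropy, Fintype.sum_bool, triBernoulli, nlog, negMulLog_eq_neg]
  ring

theorem jEnt2_eq_integral_biBernoulliEntropy :
    jEnt2 W1 W2 W12 = ∫ p in unitSq, biBernoulliEntropy (W1 p) (W2 p) (W12 p) := by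
  unfold jEnt2
  congr 1 with p
  simp only [biBernoulliEntropy, Fintype.sum_bool, biBernoulli, nlog, negMulLog_eq_neg]
  ring

theorem TriNonneg.triBernoulli_nonneg (h : TriNonneg W1 W2 W3 W12 W13 W23 W123) :
    ∀ p ∈ unitSq, ∀ x y z,
      0 ≤ triBernoulli (W1 p) (W2 p) (W3 p) (W12 p) (W13 p) (W23 p) (W123 p) x y z := by
  intro p hp x y z
  obtain ⟨_, _, _, _, _, _, _, _⟩ := h p hp
  cases x <;> cases y <;> cases z <;> assumption

end Graphon

theorem graphon_dual_total_correlation_bounds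
    (W1 W2 W3 W12 W13 W23 W123 : ℝ × ℝ → ℝ)
    (hG1 : IsGraphon W1) (hG2 : IsGraphon W2) (hG3 : IsGraphon W3)
    (hG12 : IsGraphon W12) (hG13 : IsGraphon W13) (hG23 : IsGraphon W23)
    (hG123 : IsGraphon W123)
    (hnn : TriNonneg W1 W2 W3 W12 W13 W23 W123) :
    0 ≤ jEnt2 W2 W3 W23 + jEnt2 W1 W3 W13 + jEnt2 W1 W2 W12
        - 2 * jEnt3 W1 W2 W3 W12 W13 W23 W123 ∧
    jEnt2 W2 W3 W23 + jEnt2 W1 W3 W13 + jEnt2 W1 W2 W12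
        - 2 * jEnt3 W1 W2 W3 W12 W13 W23 W123
      ≤ jEnt3 W1 W2 W3 W12 W13 W23 W123 := by
  have hq := hnn.triBernoulli_nonneg
  have i₁₂₃ := integrableOn_triBernoulliEntropy measurableSet_unitSq volume_unitSq_ne_top
    hG1.1 hG2.1 hG3.1 hG12.1 hG13.1 hG23.1 hG123.1 hq
  have i₂₃ := integrableOn_biBernoulliEntropy measurableSet_unitSq volume_unitSq_ne_top
    hG2.1 hG3.1 hG23.1 fun p hp y z =>
      sum_triBernoulli_fst .. ▸ sum_nonneg fun x _ => hq p hp x y z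
  have i₁₃ := integrableOn_biBernoulliEntropy measurableSet_unitSq volume_unitSq_ne_top
    hG1.1 hG3.1 hG13.1 fun p hp x z =>
      sum_triBernoulli_snd .. ▸ sum_nonneg fun y _ => hq p hp x y z
  have i₁₂ := integrableOn_biBernoulliEntropy measurableSet_unitSq volume_unitSq_ne_top
    hG1.1 hG2.1 hG12.1 fun p hp x y =>
      sum_triBernoulli_thd .. ▸ sum_nonneg fun z _ => hq p hp x y z
  have lower := setIntegral_mono_on (i₁₂₃.const_mul 2) ((i₂₃.add i₁₃).add i₁₂)
    measurableSet_unitSq fun p hp => two_mul_triBernoulliEntropy_le (hq p hp)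
  have upper := setIntegral_mono_on ((i₂₃.add i₁₃).add i₁₂) (i₁₂₃.const_mul 3)
    measurableSet_unitSq fun p hp => biBernoulliEntropy_marginals_le (hq p hp)
  rw [integral_const_mul, integral_add' (i₂₃.add i₁₃) i₁₂, integral_add' i₂₃ i₁₃] at lower upper
  rw [jEnt3_eq_integral_triBernoulliEntropy, jEnt2_eq_integral_biBernoulliEntropy,
    jEnt2_eq_integral_biBernoulliEntropy, jEnt2_eq_integral_biBernoulliEntropy]
  constructor <;> linarith
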